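/- arXiv:1303.4536 — 2 statements merged into one kernel-verified Lean document; each statement's English description precedes it below -/
import Mathlib

section
/- Both main diagonals of F have the magic sum: ∑_{r=1}^{n} F(r,r) = n(n²+1)/2 and ∑_{r=1}^{n} F(r, n+1−r) = n(n²+1)/2. -/
/-- Base array of the doubly-even construction: for `1 ≤ k ≤ n/2`,
if `k` is odd then `B r k = (k-1)n + r` and `B r (n+1-k) = 2p - kn + r`;
if `k` is even then `B r k = kn + 1 - r` and `B r (n+1-k) = 2p - (k-1)n + 1 - r`,
where `p = n²/2`. -/
def B (n r c : ℕ) : ℕ :=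
  if c ≤ n / 2 then
    if Odd c then (c - 1) * n + r else c * n + 1 - r
  else
    if Odd (n + 1 - c) then 2 * (n ^ 2 / 2) - (n + 1 - c) * n + r
    else 2 * (n ^ 2 / 2) - (n + 1 - c - 1) * n + 1 - r

/-- The set of rows to be swapped:
`S = {r : 1 ≤ r ≤ n, r even, r ≤ n/2} ∪ {r : 1 ≤ r ≤ n, r odd, n/2 < r ≤ n-1}`. -/
def S (n r : ℕ) : Prop :=
  1 ≤ r ∧ r ≤ n ∧ ((Even r ∧ r ≤ n / 2) ∨ (Odd r ∧ n / 2 < r ∧ r ≤ n - 1))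

instance (n r : ℕ) : Decidable (S n r) := by unfold S; infer_instance

/-- The final array: `F r c = B r (n+1-c)` if `r ∈ S`, and `F r c = B r c` otherwise. -/
def F (n r c : ℕ) : ℕ := if S n r then B n r (n + 1 - c) else B n r c

/-!
Write `r' = n + 1 - r` and `c' = n + 1 - c`. For even `n` the base array is complementary
under the central symmetry, `B r c + B r' c' = n² + 1`, and the set `S` of reversed rows is
invariant under `r ↦ r'`, so `F` is complementary as well. The central symmetry maps each main
diagonal to itself, so pairing `r` with `r'` shows that twice a diagonal sum is `n (n² + 1)`.
-/

lemma B_add_B_reflect_of_le_half {n r c : ℕ} (hn : Even n) (hr : r ≤ n) (hc₁ : 1 ≤ c)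
    (hc : c ≤ n / 2) :
    B n r c + B n (n + 1 - r) (n + 1 - c) = n ^ 2 + 1 := by
  have hsq : 2 * (n ^ 2 / 2) = n ^ 2 :=
    Nat.two_mul_div_two_of_even (Nat.even_pow.mpr ⟨hn, two_ne_zero⟩)
  have hcn : c * n ≤ n ^ 2 := by rw [sq]; exact Nat.mul_le_mul_right _ (by omega)
  have hnc : n ≤ c * n := Nat.le_mul_of_pos_left _ hc₁
  have hc' : (c - 1) * n = c * n - n := Nat.sub_one_mul _ _
  have hc_refl : ¬ n + 1 - c ≤ n / 2 := by omega
  unfold B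
  rw [if_pos hc, if_neg hc_refl, Nat.sub_sub_self (by omega : c ≤ n + 1), hsq]
  split_ifs <;> omega

lemma B_add_B_reflect {n r c : ℕ} (hn : Even n) (hr₁ : 1 ≤ r) (hr : r ≤ n)
    (hc₁ : 1 ≤ c) (hc : c ≤ n) :
    B n r c + B n (n + 1 - r) (n + 1 - c) = n ^ 2 + 1 := by
  rcases le_or_gt c (n / 2) with hc' | hc'
  · exact B_add_B_reflect_of_le_half hn hr hc₁ hc'
  · have := Nat.even_iff.mp hn
    have h := B_add_B_reflect_of_le_half (r := n + 1 - r) (c := n + 1 - c) hn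
      (by omega) (by omega) (by omega)
    rwa [Nat.sub_sub_self (by omega), Nat.sub_sub_self (by omega), add_comm] at h

lemma S_reflect_iff {n r : ℕ} (hn : Even n) :
    S n (n + 1 - r) ↔ S n r := by
  rw [Nat.even_iff] at hn
  unfold S
  simp only [Nat.even_iff, Nat.odd_iff]
  omega

lemma F_add_F_reflect {n r c : ℕ} (hn : Even n) (hr₁ : 1 ≤ r) (hr : r ≤ n)
    (hc₁ : 1 ≤ c) (hc : c ≤ n) :
    F n r c + F n (n + 1 - r) (n + 1 - c) = n ^ 2 + 1 := by
  by_cases hS : S n r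
  · have hS' : S n (n + 1 - r) := (S_reflect_iff hn).mpr hS
    rw [F, F, if_pos hS, if_pos hS']
    exact B_add_B_reflect hn hr₁ hr (by omega) (by omega)
  · have hS' : ¬S n (n + 1 - r) := mt (S_reflect_iff hn).mp hS
    rw [F, F, if_neg hS, if_neg hS']
    exact B_add_B_reflect hn hr₁ hr hc₁ hc

lemma Finset.sum_Icc_reflect {M : Type*} [AddCommMonoid M] (f : ℕ → M) (n : ℕ) :
    ∑ r ∈ Icc 1 n, f (n + 1 - r) = ∑ r ∈ Icc 1 n, f r := by
  refine sum_nbij' (fun r ↦ n + 1 - r) (fun r ↦ n + 1 - r) ?_ ?_ ?_ ?_ ?_ <;>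
    intros <;> simp_all only [mem_Icc] <;> omega

lemma Finset.two_nsmul_sum_Icc_of_add_reflect {M : Type*} [AddCommMonoid M] {f : ℕ → M}
    {n : ℕ} {C : M} (h : ∀ r ∈ Icc 1 n, f r + f (n + 1 - r) = C) :
    2 • ∑ r ∈ Icc 1 n, f r = n • C := by
  calc 2 • ∑ r ∈ Icc 1 n, f r = ∑ r ∈ Icc 1 n, (f r + f (n + 1 - r)) := by
        rw [sum_add_distrib, sum_Icc_reflect, two_nsmul]
    _ = n • C := by rw [sum_congr rfl h, sum_const, Nat.card_Icc, Nat.add_sub_cancel]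

theorem doubly_even_diagonal_sums_general (n : ℕ) (h4 : n % 4 = 0) :
    (∑ r ∈ Finset.Icc 1 n, F n r r = n * (n ^ 2 + 1) / 2) ∧
    (∑ r ∈ Finset.Icc 1 n, F n r (n + 1 - r) = n * (n ^ 2 + 1) / 2) := by
  have hn : Even n := Nat.even_iff.mpr (by omega)
  have diagonal_sum {f : ℕ → ℕ} (hf : ∀ r ∈ Finset.Icc 1 n, f r + f (n + 1 - r) = n ^ 2 + 1) :
      ∑ r ∈ Finset.Icc 1 n, f r = n * (n ^ 2 + 1) / 2 := by
    have h := Finset.two_nsmul_sum_Icc_of_add_reflect hf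
    rw [smul_eq_mul, smul_eq_mul] at h
    omega
  constructor
  · refine diagonal_sum (f := fun r ↦ F n r r) fun r hr ↦ ?_
    obtain ⟨hr₁, hr⟩ := Finset.mem_Icc.mp hr
    exact F_add_F_reflect hn hr₁ hr hr₁ hr
  · refine diagonal_sum (f := fun r ↦ F n r (n + 1 - r)) fun r hr ↦ ?_
    obtain ⟨hr₁, hr⟩ := Finset.mem_Icc.mp hr
    exact F_add_F_reflect hn hr₁ hr (by omega) (by omega)

/-- Both main diagonals of `F` have the magic sum `n(n²+1)/2`. -/
theorem doubly_even_diagonal_sums (n : ℕ) (h4 : n % 4 = 0) (hn : 4 ≤ n) :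
    (∑ r ∈ Finset.Icc 1 n, F n r r = n * (n ^ 2 + 1) / 2) ∧
    (∑ r ∈ Finset.Icc 1 n, F n r (n + 1 - r) = n * (n ^ 2 + 1) / 2) :=
  doubly_even_diagonal_sums_general n h4
end

section
/- The array F' is a magic square of order n: the values F'(r,c) for r,c ∈ {1,…,n} are exactly the numbers 1, 2, …, n² each occurring once, and every row sum, every column sum, and both main diagonal sums equal n(n²+1)/2. -/
/-- Base array of the singly-even construction on rows `1 ≤ r ≤ n-2`, columns `1 ≤ c ≤ n`:
for `1 ≤ k ≤ n/2 - 1`, if `k` is odd then `B' r k = (k-1)(n-2) + r` and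
`B' r (n+1-k) = 2p - k(n-2) + r`; if `k` is even then `B' r k = k(n-2) + 1 - r` and
`B' r (n+1-k) = 2p - (k-1)(n-2) + 1 - r`; and for `k = m = n/2`,
`B' r m = (m-1)(n-2) + r` and `B' r (m+1) = 2p - (m-1)(n-2) + 1 - r`, where `p = n²/2`. -/
def B' (n r c : ℕ) : ℕ :=
  if c ≤ n / 2 - 1 then
    if Odd c then (c - 1) * (n - 2) + r else c * (n - 2) + 1 - r
  else if c = n / 2 then (n / 2 - 1) * (n - 2) + r
  else if c = n / 2 + 1 then 2 * (n ^ 2 / 2) - (n / 2 - 1) * (n - 2) + 1 - r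
  else
    if Odd (n + 1 - c) then 2 * (n ^ 2 / 2) - (n + 1 - c) * (n - 2) + r
    else 2 * (n ^ 2 / 2) - (n + 1 - c - 1) * (n - 2) + 1 - r

/-- The set of rows to be swapped:
`S' = {r : r even, r ≤ (n-2)/2} ∪ {r : r odd, (n-2)/2 < r ≤ n-3}`. -/
def S' (n r : ℕ) : Prop :=
  (Even r ∧ r ≤ (n - 2) / 2) ∨ (Odd r ∧ (n - 2) / 2 < r ∧ r ≤ n - 3)

instance (n r : ℕ) : Decidable (S' n r) := by unfold S'; infer_instance

/-- The inner array: `G r c = B' r (n+1-c)` if `r ∈ S'`, and `G r c = B' r c` otherwise. -/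
def G (n r c : ℕ) : ℕ := if S' n r then B' n r (n + 1 - c) else B' n r c

/-- The first row of the singly-even construction, with `p = n²/2` and `m = n/2`:
`R₁ 1 = p+1`, `R₁ n = p+2`, `R₁ (m+2) = p+n-m`, `R₁ (m+3) = p+n-m-1`;
for `2 ≤ j ≤ m+1`, `R₁ j = p-n+j-1` if `j` even and `R₁ j = p+n+2-j` if `j` odd;
for `m+4 ≤ j ≤ n-1`, `R₁ j = p-n+j-1` if `j` odd and `R₁ j = p+n+2-j` if `j` even. -/
def R1 (n j : ℕ) : ℕ :=
  if j = 1 then n ^ 2 / 2 + 1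
  else if j = n then n ^ 2 / 2 + 2
  else if j = n / 2 + 2 then n ^ 2 / 2 + n - n / 2
  else if j = n / 2 + 3 then n ^ 2 / 2 + n - n / 2 - 1
  else if j ≤ n / 2 + 1 then
    if Even j then n ^ 2 / 2 - n + j - 1 else n ^ 2 / 2 + n + 2 - j
  else
    if Odd j then n ^ 2 / 2 - n + j - 1 else n ^ 2 / 2 + n + 2 - j

/-- The last row: `Rₙ j = n² + 1 - R₁ j`. -/
def Rn (n j : ℕ) : ℕ := n ^ 2 + 1 - R1 n j

/-- The complete singly-even array: first row `R₁`, last row `Rₙ`,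
and `F' r c = G (r-1) c` for `2 ≤ r ≤ n-1`. -/
def F' (n r c : ℕ) : ℕ :=
  if r = 1 then R1 n c else if r = n then Rn n c else G n (r - 1) c

/-!
Write `n = 2m` with `m` odd and `p = n²/2`. In the base array `B'`, column `k ≤ m` holds the
block `(k-1)(n-2)+1, …, k(n-2)` (downwards for odd `k`, upwards for even `k`), and column `n+1-k`
holds the complements `n² + 1 - v` of column `k`, with the rows reversed except when `k = m`.
So the inner rows of `F'` take every value outside the middle band `(p - n, p + n]` exactly once,
while the band splits into the complementary pairs `{p - n + t, p + n + 1 - t}`, of which `R1`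
takes one in column `t + 1` (cyclically) and `Rn` the other; counting gives bijectivity.

For the sums, `B' x k + B' y (n+1-k) = n² + 1 + δ` with a defect `δ` that is `x - y` in the
middle column and `±(x + y - (n-1))` elsewhere. Along a row (`x = y`) the defects alternate in
sign and cancel because `m - 1` is even. Down a column, the inner rows come in pairs
`2j+1, 2j+2` of which exactly one lies in `S'`, and the choice of `S'` makes the defects of these
pairs sum to zero. The diagonals are computed on the same pairs of rows.
-/

open Finset

section Sums

variable {M : Type*} [AddCommMonoid M]

theorem Finset.sum_Icc_one_succ (f : ℕ → M) (N : ℕ) :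
    ∑ i ∈ Icc 1 (N + 1), f i = f 1 + ∑ i ∈ Icc 1 N, f (i + 1) := by
  induction N with
  | zero => simp
  | succ N ih => rw [sum_Icc_succ_top (by omega), ih, sum_Icc_succ_top (by omega), add_assoc]

theorem Finset.sum_Icc_two_mul_eq_sum_pairs (f : ℕ → M) (a : ℕ) :
    ∑ i ∈ Icc 1 (2 * a), f i = ∑ j ∈ range a, (f (2 * j + 1) + f (2 * j + 2)) := by
  induction a with
  | zero => simp
  | succ a ih =>
    rw [show 2 * (a + 1) = 2 * a + 1 + 1 by ring, sum_Icc_succ_top (by omega),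
      sum_Icc_succ_top (by omega), ih, sum_range_succ, add_assoc]

theorem Finset.sum_Icc_two_mul_eq_sum_add_reflect (f : ℕ → M) (m : ℕ) :
    ∑ i ∈ Icc 1 (2 * m), f i = ∑ k ∈ Icc 1 m, (f k + f (2 * m + 1 - k)) := by
  have hsplit : Icc 1 (2 * m) = Icc 1 m ∪ Icc (m + 1) (2 * m) := by
    ext i; simp only [mem_union, mem_Icc]; omega
  have hdisj : Disjoint (Icc 1 m) (Icc (m + 1) (2 * m)) := by
    rw [disjoint_left]; intro i; simp only [mem_Icc]; omega
  rw [hsplit, sum_union hdisj, sum_add_distrib]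
  congr 1
  exact sum_nbij' (2 * m + 1 - ·) (2 * m + 1 - ·) (by simp only [mem_Icc]; omega)
    (by simp only [mem_Icc]; omega) (by simp only [mem_Icc]; omega)
    (by simp only [mem_Icc]; omega) (by simp only [mem_Icc]; intro i hi; congr 1; omega)

theorem Finset.sum_Icc_one_reflect (f : ℕ → M) (n : ℕ) :
    ∑ i ∈ Icc 1 n, f (n + 1 - i) = ∑ i ∈ Icc 1 n, f i :=
  sum_nbij' (n + 1 - ·) (n + 1 - ·) (by simp only [mem_Icc]; omega)
    (by simp only [mem_Icc]; omega) (by simp only [mem_Icc]; omega)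
    (by simp only [mem_Icc]; omega) (fun _ _ => rfl)

theorem Finset.sum_Icc_one_eq_first_add_sum_add_last (f : ℕ → M) {n : ℕ} (hn : 2 ≤ n) :
    ∑ i ∈ Icc 1 n, f i = f 1 + ∑ i ∈ Icc 1 (n - 2), f (i + 1) + f n := by
  obtain ⟨N, rfl⟩ : ∃ N, n = N + 2 := ⟨n - 2, by omega⟩
  rw [sum_Icc_succ_top (by omega), sum_Icc_one_succ, Nat.add_sub_cancel]

theorem Finset.sum_range_ite_lt_ite_eq (A B C : M) {s t : ℕ} (h : s < t) :
    ∑ j ∈ range t, (if j < s then A else if j = s then B else C)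
      = s • A + B + (t - s - 1) • C := by
  obtain ⟨u, rfl⟩ : ∃ u, t = s + 1 + u := ⟨t - s - 1, by omega⟩
  rw [sum_range_add, sum_range_add, sum_range_one,
    sum_congr rfl fun j hj => if_pos (mem_range.1 hj),
    sum_congr rfl fun j _ => show (if s + 1 + j < s then A else if s + 1 + j = s then B else C) = C
      by rw [if_neg (by omega), if_neg (by omega)],
    show s + 1 + u - s - 1 = u by omega]
  simp

end Sums

section Arithmetic

variable {n : ℕ}

theorem two_mul_sq_div_two (hn : Even n) : 2 * (n ^ 2 / 2) = n ^ 2 :=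
  Nat.two_mul_div_two_of_even (hn.pow_of_ne_zero two_ne_zero)

theorem two_mul_le_sq_div_two (h4 : 4 ≤ n) : 2 * n ≤ n ^ 2 / 2 := by
  rw [Nat.le_div_iff_mul_le (by norm_num)]; nlinarith

end Arithmetic

section BaseArray

variable {n r k x y v : ℕ}

theorem B'_left (hn : n % 4 = 2) (hk1 : 1 ≤ k) (hk : k ≤ n / 2) (hr : r < n) :
    (B' n r k : ℤ) = (k - 1) * (n - 2) + if k % 2 = 1 then (r : ℤ) else n - 1 - r := by
  have hpos : n - 2 ≤ k * (n - 2) := Nat.le_mul_of_pos_left _ hk1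
  unfold B'
  by_cases hmid : k = n / 2
  · rw [if_neg (by omega), if_pos hmid, if_pos (by omega), hmid]
    push_cast [show 1 ≤ n / 2 by omega, show 2 ≤ n by omega]
    ring
  rw [if_pos (by omega)]
  rcases Nat.mod_two_eq_zero_or_one k with hk2 | hk2
  · rw [if_neg (by rw [Nat.odd_iff]; omega), if_neg (by omega)]
    push_cast [show r ≤ k * (n - 2) + 1 by omega, show 2 ≤ n by omega]
    ring
  · rw [if_pos (Nat.odd_iff.2 hk2), if_pos hk2]
    push_cast [hk1, show 2 ≤ n by omega]
    ring

theorem B'_mirror_add_B' (hn : n % 4 = 2) (hk1 : 1 ≤ k) (hk : k ≤ n / 2) (hr : r < n) :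
    B' n r (n + 1 - k) + B' n (if k = n / 2 then r else n - 1 - r) k = n ^ 2 + 1 := by
  have hsq := two_mul_sq_div_two (n := n) (Nat.even_iff.2 (by omega))
  have hstep : k * (n - 2) = (k - 1) * (n - 2) + (n - 2) := by
    rw [Nat.sub_one_mul, Nat.sub_add_cancel (Nat.le_mul_of_pos_left _ hk1)]
  have hbig : n / 2 * (n - 2) + n ≤ n ^ 2 := by
    have : (n / 2) * (n - 2) + n ≤ (n / 2) * n := by
      rw [Nat.mul_sub, ← Nat.sub_add_comm (Nat.mul_le_mul_left _ (by omega))]; omega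
    have : (n / 2) * n ≤ n ^ 2 := by rw [sq]; exact Nat.mul_le_mul_right _ (Nat.div_le_self n 2)
    omega
  have hmono : k * (n - 2) ≤ n / 2 * (n - 2) := Nat.mul_le_mul_right _ hk
  have hhalf : n / 2 * (n - 2) = (n / 2 - 1) * (n - 2) + (n - 2) := by
    rw [Nat.sub_one_mul, Nat.sub_add_cancel (Nat.le_mul_of_pos_left _ (by omega))]
  unfold B'
  rw [show n + 1 - (n + 1 - k) = k by omega]
  simp only [Nat.odd_iff]
  split_ifs <;> omega

theorem B'_right (hn : n % 4 = 2) (hk1 : 1 ≤ k) (hk : k ≤ n / 2) (hr : r < n) :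
    (B' n r (n + 1 - k) : ℤ) =
      n ^ 2 + 1 - (k - 1) * (n - 2) -
        if k % 2 = 1 ∧ k ≠ n / 2 then (n - 1 - r : ℤ) else r := by
  have h : (B' n r (n + 1 - k) + B' n (if k = n / 2 then r else n - 1 - r) k : ℤ) = n ^ 2 + 1 :=
    by exact_mod_cast B'_mirror_add_B' hn hk1 hk hr
  rw [B'_left hn hk1 hk (by split_ifs <;> omega)] at h
  rw [← h]
  split_ifs <;> omega

/-- How far `B' n x k + B' n y (n + 1 - k)` is from the complementary value `n² + 1`. -/
def mirrorDefect (n k x y : ℕ) : ℤ :=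
  if k = n / 2 then (x : ℤ) - y
  else if k % 2 = 1 then (x + y : ℤ) - (n - 1) else n - 1 - (x + y)

theorem B'_add_B'_mirror (hn : n % 4 = 2) (hk1 : 1 ≤ k) (hk : k ≤ n / 2) (hx : x < n)
    (hy : y < n) :
    (B' n x k + B' n y (n + 1 - k) : ℤ) = n ^ 2 + 1 + mirrorDefect n k x y := by
  rw [B'_left hn hk1 hk hx, B'_right hn hk1 hk hy, mirrorDefect]
  split_ifs <;> omega

theorem sum_mirrorDefect_self (hn : n % 4 = 2) (r : ℕ) :
    ∑ k ∈ Icc 1 (n / 2), mirrorDefect n k r r = 0 := by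
  rw [show n / 2 = 2 * ((n - 2) / 4) + 1 by omega, sum_Icc_succ_top (by omega),
    sum_Icc_two_mul_eq_sum_pairs, sum_eq_zero fun j hj => ?_]
  · simp [mirrorDefect, show 2 * ((n - 2) / 4) + 1 = n / 2 by omega]
  have hj := mem_range.1 hj
  simp only [mirrorDefect, if_neg (show 2 * j + 1 ≠ n / 2 by omega),
    if_neg (show 2 * j + 2 ≠ n / 2 by omega), if_pos (show (2 * j + 1) % 2 = 1 by omega),
    if_neg (show ¬(2 * j + 2) % 2 = 1 by omega)]
  ring

theorem two_mul_sum_B'_row (hn : n % 4 = 2) (hr : r < n) :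
    2 * ∑ c ∈ Icc 1 n, (B' n r c : ℤ) = n * (n ^ 2 + 1) := by
  have hsplit := sum_Icc_two_mul_eq_sum_add_reflect (fun c => (B' n r c : ℤ)) (n / 2)
  rw [show 2 * (n / 2) = n by omega] at hsplit
  rw [hsplit, sum_congr rfl fun k hk => B'_add_B'_mirror hn (mem_Icc.1 hk).1 (mem_Icc.1 hk).2 hr hr,
    sum_add_distrib, sum_mirrorDefect_self hn, sum_const, Nat.card_Icc, Nat.add_sub_cancel,
    nsmul_eq_mul, add_zero]
  have : ((n / 2 : ℕ) : ℤ) * 2 = n := by exact_mod_cast (by omega : n / 2 * 2 = n)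
  linear_combination (n ^ 2 + 1 : ℤ) * this

theorem B'_left_mem_Icc (hn : n % 4 = 2) (hr1 : 1 ≤ r) (hr : r ≤ n - 2) (hk1 : 1 ≤ k)
    (hk : k ≤ n / 2) : B' n r k ∈ Icc 1 (n ^ 2) := by
  have h := B'_left hn hk1 hk (show r < n by omega)
  have h0 : (0 : ℤ) ≤ (k - 1) * (n - 2) := mul_nonneg (by omega) (by omega)
  have h1 : (k : ℤ) * (n - 2) ≤ n * n := mul_le_mul (by omega) (by omega) (by omega) (by omega)
  have hr' : (1 : ℤ) ≤ r ∧ (r : ℤ) ≤ n - 2 := by omega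
  rw [mem_Icc]; zify
  split_ifs at h <;> constructor <;> nlinarith

theorem B'_mem_Icc (hn : n % 4 = 2) (hr1 : 1 ≤ r) (hr : r ≤ n - 2) {c : ℕ} (hc1 : 1 ≤ c)
    (hc : c ≤ n) : B' n r c ∈ Icc 1 (n ^ 2) := by
  rcases le_or_gt c (n / 2) with hc2 | hc2
  · exact B'_left_mem_Icc hn hr1 hr hc1 hc2
  have h := B'_mirror_add_B' hn (k := n + 1 - c) (by omega) (by omega) (show r < n by omega)
  rw [show n + 1 - (n + 1 - c) = c by omega] at h
  have := mem_Icc.1 (B'_left_mem_Icc hn (r := if n + 1 - c = n / 2 then r else n - 1 - r)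
    (by split_ifs <;> omega) (by split_ifs <;> omega) (show 1 ≤ n + 1 - c by omega)
    (by omega))
  rw [mem_Icc]; omega

theorem exists_B'_left_eq (hn : n % 4 = 2) (hv1 : 1 ≤ v) (hv : v ≤ n / 2 * (n - 2)) :
    ∃ r ∈ Icc 1 (n - 2), ∃ k ∈ Icc 1 (n / 2), B' n r k = v := by
  have hN : 0 < n - 2 := Nat.pos_of_ne_zero fun h => by rw [h, mul_zero] at hv; omega
  obtain ⟨q, s, hqs, hs⟩ : ∃ q s, v - 1 = (n - 2) * q + s ∧ s < n - 2 :=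
    ⟨_, _, (Nat.div_add_mod _ _).symm, Nat.mod_lt _ hN⟩
  have hq : q < n / 2 :=
    Nat.lt_of_mul_lt_mul_left (a := n - 2) (by rw [Nat.mul_comm (n - 2) (n / 2)]; omega)
  have hv' : (v : ℤ) = (q + 1 - 1) * (n - 2) + (s + 1) := by
    have : v = (n - 2) * q + s + 1 := by omega
    rw [this]; push_cast [show 2 ≤ n by omega]; ring
  rcases Nat.mod_two_eq_zero_or_one (q + 1) with hpar | hpar
  · refine ⟨n - 2 - s, mem_Icc.2 ⟨by omega, by omega⟩, q + 1, mem_Icc.2 ⟨by omega, hq⟩,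
      ?_⟩
    zify
    rw [B'_left hn (by omega) hq (by omega), if_neg (by omega), hv']
    push_cast [show s ≤ n - 2 by omega, show 2 ≤ n by omega]
    ring
  · refine ⟨s + 1, mem_Icc.2 ⟨by omega, by omega⟩, q + 1, mem_Icc.2 ⟨by omega, hq⟩, ?_⟩
    zify
    rw [B'_left hn (by omega) hq (by omega), if_pos hpar, hv']
    push_cast
    ring

theorem exists_B'_eq (hn : n % 4 = 2) (hv1 : 1 ≤ v) (hv : v ≤ n ^ 2)
    (hlow : v ≤ n / 2 * (n - 2) ∨ n ^ 2 + 1 - n / 2 * (n - 2) ≤ v) :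
    ∃ r ∈ Icc 1 (n - 2), ∃ c ∈ Icc 1 n, B' n r c = v := by
  rcases hlow with hlow | hhigh
  · obtain ⟨r, hr, k, hk, h⟩ := exists_B'_left_eq hn hv1 hlow
    exact ⟨r, hr, k, by simp only [mem_Icc] at hk ⊢; omega, h⟩
  obtain ⟨r, hr, k, hk, h⟩ := exists_B'_left_eq hn (v := n ^ 2 + 1 - v) (by omega) (by omega)
  rw [mem_Icc] at hr hk
  refine ⟨if k = n / 2 then r else n - 1 - r, by rw [mem_Icc]; split_ifs <;> omega,
    n + 1 - k, mem_Icc.2 ⟨by omega, by omega⟩, ?_⟩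
  have := B'_mirror_add_B' hn hk.1 hk.2 (r := if k = n / 2 then r else n - 1 - r)
    (by split_ifs <;> omega)
  rw [show (if k = n / 2 then if k = n / 2 then r else n - 1 - r
      else n - 1 - if k = n / 2 then r else n - 1 - r) = r by split_ifs <;> omega, h] at this
  omega

end BaseArray

section InnerArray

variable {n r j c : ℕ}

theorem S'_two_mul_add_one_iff (hn : n % 4 = 2) :
    S' n (2 * j + 1) ↔ (n - 2) / 4 ≤ j ∧ j < (n - 2) / 2 := by
  simp only [S', Nat.even_iff, Nat.odd_iff]; omega

theorem S'_two_mul_add_two_iff (hn : n % 4 = 2) : S' n (2 * j + 2) ↔ j < (n - 2) / 4 := by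
  simp only [S', Nat.even_iff, Nat.odd_iff]; omega

/-- Of the inner rows `2j+1` and `2j+2`, exactly one lies in `S'`: `swappedRow n j`. -/
def keptRow (n j : ℕ) : ℕ := if j < (n - 2) / 4 then 2 * j + 1 else 2 * j + 2

def swappedRow (n j : ℕ) : ℕ := if j < (n - 2) / 4 then 2 * j + 2 else 2 * j + 1

theorem G_add_G_pair (hn : n % 4 = 2) (hj : j < (n - 2) / 2) (c : ℕ) :
    G n (2 * j + 1) c + G n (2 * j + 2) c =
      B' n (keptRow n j) c + B' n (swappedRow n j) (n + 1 - c) := by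
  unfold G keptRow swappedRow
  by_cases h : j < (n - 2) / 4
  · rw [if_neg (by rw [S'_two_mul_add_one_iff hn]; omega),
      if_pos ((S'_two_mul_add_two_iff hn).2 h), if_pos h, if_pos h]
  · rw [if_pos ((S'_two_mul_add_one_iff hn).2 ⟨by omega, hj⟩),
      if_neg (by rw [S'_two_mul_add_two_iff hn]; omega), if_neg h, if_neg h, add_comm]

theorem sum_keptRow_sub_swappedRow (hn : n % 4 = 2) :
    ∑ j ∈ range ((n - 2) / 2), ((keptRow n j : ℤ) - swappedRow n j) = 0 := by
  rw [show (n - 2) / 2 = (n - 2) / 4 + (n - 2) / 4 by omega, sum_range_add,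
    sum_congr rfl fun j hj => show (keptRow n j : ℤ) - swappedRow n j = -1 by
      simp only [keptRow, swappedRow, if_pos (mem_range.1 hj)]; push_cast; ring,
    sum_congr rfl fun j _ =>
      show (keptRow n ((n - 2) / 4 + j) : ℤ) - swappedRow n ((n - 2) / 4 + j) = 1 by
      simp only [keptRow, swappedRow, if_neg (show ¬(n - 2) / 4 + j < (n - 2) / 4 by omega)]
      push_cast; ring]
  simp

theorem sum_keptRow_add_swappedRow (hn : n % 4 = 2) :
    ∑ j ∈ range ((n - 2) / 2), ((keptRow n j + swappedRow n j : ℤ) - (n - 1)) = 0 := by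
  have gauss : ∀ N : ℕ, ∑ j ∈ range N, (2 * j : ℤ) = N * (N - 1) := fun N => by
    induction N with
    | zero => simp
    | succ N ih => rw [sum_range_succ, ih]; push_cast; ring
  have hpair : ∀ j, (keptRow n j + swappedRow n j : ℤ) = 2 * (2 * j) + 3 := fun j => by
    unfold keptRow swappedRow; split_ifs <;> push_cast <;> ring
  generalize hN : (n - 2) / 2 = N
  have hn' : (n : ℤ) - 1 = 2 * N + 1 := by omega
  simp only [hpair, hn', sum_sub_distrib, sum_add_distrib, ← mul_sum, gauss, sum_const,
    card_range, nsmul_eq_mul]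
  ring

theorem sum_mirrorDefect_keptRow_swappedRow (hn : n % 4 = 2) (k : ℕ) :
    ∑ j ∈ range ((n - 2) / 2), mirrorDefect n k (keptRow n j) (swappedRow n j) = 0 ∧
      ∑ j ∈ range ((n - 2) / 2), mirrorDefect n k (swappedRow n j) (keptRow n j) = 0 := by
  have h1 := sum_keptRow_sub_swappedRow hn
  have h2 := sum_keptRow_add_swappedRow hn
  unfold mirrorDefect
  split_ifs
  · refine ⟨h1, ?_⟩
    rw [← neg_eq_zero, ← sum_neg_distrib, ← h1]; simp
  · simp only [add_comm (swappedRow n _ : ℤ)]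
    exact ⟨h2, h2⟩
  · simp only [add_comm (swappedRow n _ : ℤ)]
    rw [← neg_eq_zero, ← sum_neg_distrib, ← h2]
    simp

theorem keptRow_lt (hj : j < (n - 2) / 2) : keptRow n j < n := by
  unfold keptRow; split_ifs <;> omega

theorem swappedRow_lt (hj : j < (n - 2) / 2) : swappedRow n j < n := by
  unfold swappedRow; split_ifs <;> omega

theorem two_mul_sum_G_col (hn : n % 4 = 2) (hc1 : 1 ≤ c) (hc : c ≤ n) :
    2 * ∑ r ∈ Icc 1 (n - 2), (G n r c : ℤ) = (n - 2) * (n ^ 2 + 1) := by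
  obtain ⟨D, hD, hpair⟩ : ∃ D : ℕ → ℤ, ∑ j ∈ range ((n - 2) / 2), D j = 0 ∧
      ∀ j ∈ range ((n - 2) / 2),
        (G n (2 * j + 1) c + G n (2 * j + 2) c : ℤ) = n ^ 2 + 1 + D j := by
    rcases le_or_gt c (n / 2) with h | h
    · refine ⟨_, (sum_mirrorDefect_keptRow_swappedRow hn c).1, fun j hj => ?_⟩
      have hj := mem_range.1 hj
      rw [← Nat.cast_add, G_add_G_pair hn hj, Nat.cast_add]
      exact B'_add_B'_mirror hn hc1 h (keptRow_lt hj) (swappedRow_lt hj)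
    · refine ⟨_, (sum_mirrorDefect_keptRow_swappedRow hn (n + 1 - c)).2, fun j hj => ?_⟩
      have hj := mem_range.1 hj
      rw [← Nat.cast_add, G_add_G_pair hn hj, Nat.cast_add, add_comm]
      have := B'_add_B'_mirror hn (k := n + 1 - c) (by omega) (by omega) (swappedRow_lt hj)
        (keptRow_lt hj)
      rwa [show n + 1 - (n + 1 - c) = c by omega] at this
  have hpairs := sum_Icc_two_mul_eq_sum_pairs (fun r => (G n r c : ℤ)) ((n - 2) / 2)
  rw [show 2 * ((n - 2) / 2) = n - 2 by omega] at hpairs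
  rw [hpairs, sum_congr rfl hpair, sum_add_distrib, hD, sum_const, card_range, nsmul_eq_mul,
    add_zero]
  have : (((n - 2) / 2 : ℕ) : ℤ) * 2 = n - 2 := by omega
  linear_combination (n ^ 2 + 1 : ℤ) * this

theorem two_mul_sum_G_row (hn : n % 4 = 2) (hr : r < n) :
    2 * ∑ c ∈ Icc 1 n, (G n r c : ℤ) = n * (n ^ 2 + 1) := by
  by_cases h : S' n r
  · simp only [G, if_pos h]
    rw [sum_Icc_one_reflect (fun c => (B' n r c : ℤ)) n]
    exact two_mul_sum_B'_row hn hr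
  · simp only [G, if_neg h]
    exact two_mul_sum_B'_row hn hr

theorem G_diag_pair (hn : n % 4 = 2) (hj : j < (n - 2) / 2) :
    (G n (2 * j + 1) (2 * j + 2) + G n (2 * j + 2) (2 * j + 3) : ℤ) =
      if j < (n - 2) / 4 - 1 then (n : ℤ) ^ 2 - n + 4
      else if j = (n - 2) / 4 - 1 then (n : ℤ) ^ 2 - n + 5 else (n : ℤ) ^ 2 + n - 2 := by
  unfold G
  by_cases h : j < (n - 2) / 4
  · rw [if_neg (by rw [S'_two_mul_add_one_iff hn]; omega),
      if_pos ((S'_two_mul_add_two_iff hn).2 h),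
      B'_left hn (by omega) (by omega) (by omega), B'_right hn (by omega) (by omega) (by omega)]
    split_ifs <;>
      first
      | omega
      | (push_cast; linarith)
      | (push_cast; linarith [show (4 * j : ℤ) = n - 6 by omega])
  · rw [if_pos ((S'_two_mul_add_one_iff hn).2 ⟨by omega, hj⟩),
      if_neg (by rw [S'_two_mul_add_two_iff hn]; omega),
      B'_left hn (k := n + 1 - (2 * j + 2)) (by omega) (by omega) (by omega),
      show 2 * j + 3 = n + 1 - (n - 2 - 2 * j) by omega,
      B'_right hn (by omega) (by omega) (by omega),
      show ((n + 1 - (2 * j + 2) : ℕ) : ℤ) = n - 1 - 2 * j by omega,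
      show ((n - 2 - 2 * j : ℕ) : ℤ) = n - 2 - 2 * j by omega]
    split_ifs <;> first | omega | (push_cast; linarith)

theorem G_antidiag_pair (hn : n % 4 = 2) (hj : j < (n - 2) / 2) :
    (G n (2 * j + 1) (n - (2 * j + 1)) + G n (2 * j + 2) (n - (2 * j + 2)) : ℤ) =
      if j < (n - 2) / 4 then (n : ℤ) ^ 2 + n
      else if j = (n - 2) / 4 then (n : ℤ) ^ 2 - n + 1 else (n : ℤ) ^ 2 - n + 2 := by
  unfold G
  by_cases h : j < (n - 2) / 4
  · rw [if_neg (by rw [S'_two_mul_add_one_iff hn]; omega),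
      if_pos ((S'_two_mul_add_two_iff hn).2 h),
      show n - (2 * j + 1) = n + 1 - (2 * j + 2) by omega,
      show n + 1 - (n - (2 * j + 2)) = 2 * j + 3 by omega,
      B'_left hn (k := 2 * j + 3) (by omega) (by omega) (by omega),
      B'_right hn (by omega) (by omega) (by omega)]
    split_ifs <;> first | omega | (push_cast; linarith)
  · rw [if_pos ((S'_two_mul_add_one_iff hn).2 ⟨by omega, hj⟩),
      if_neg (by rw [S'_two_mul_add_two_iff hn]; omega),
      show n + 1 - (n - (2 * j + 1)) = n + 1 - (n - 1 - 2 * j) by omega,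
      B'_left hn (k := n - (2 * j + 2)) (by omega) (by omega) (by omega),
      B'_right hn (by omega) (by omega) (by omega),
      show ((n - 1 - 2 * j : ℕ) : ℤ) = n - 1 - 2 * j by omega,
      show ((n - (2 * j + 2) : ℕ) : ℤ) = n - 2 - 2 * j by omega]
    split_ifs <;>
      first
      | omega
      | (push_cast; linarith)
      | (push_cast; linarith [show (4 * j : ℤ) = n - 2 by omega])

theorem two_mul_sum_G_diag (hn : n % 4 = 2) (h6 : 6 ≤ n) :
    2 * ∑ r ∈ Icc 1 (n - 2), (G n r (r + 1) : ℤ) = (n - 2) * n ^ 2 + n := by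
  have hpairs := sum_Icc_two_mul_eq_sum_pairs (fun r => (G n r (r + 1) : ℤ)) ((n - 2) / 2)
  rw [show 2 * ((n - 2) / 2) = n - 2 by omega] at hpairs
  rw [hpairs, sum_congr rfl fun j hj => G_diag_pair hn (mem_range.1 hj),
    sum_range_ite_lt_ite_eq _ _ _ (by omega)]
  obtain ⟨a, rfl⟩ : ∃ a, n = 4 * a + 6 := ⟨(n - 6) / 4, by omega⟩
  rw [show (4 * a + 6 - 2) / 4 - 1 = a by omega, show (4 * a + 6 - 2) / 2 - a - 1 = a + 1 by omega]
  push_cast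
  ring

theorem two_mul_sum_G_antidiag (hn : n % 4 = 2) (h6 : 6 ≤ n) :
    2 * ∑ r ∈ Icc 1 (n - 2), (G n r (n - r) : ℤ) = (n - 2) * n ^ 2 + n - 4 := by
  have hpairs := sum_Icc_two_mul_eq_sum_pairs (fun r => (G n r (n - r) : ℤ)) ((n - 2) / 2)
  rw [show 2 * ((n - 2) / 2) = n - 2 by omega] at hpairs
  rw [hpairs, sum_congr rfl fun j hj => G_antidiag_pair hn (mem_range.1 hj),
    sum_range_ite_lt_ite_eq _ _ _ (by omega)]
  obtain ⟨a, rfl⟩ : ∃ a, n = 4 * a + 6 := ⟨(n - 6) / 4, by omega⟩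
  rw [show (4 * a + 6 - 2) / 4 = a + 1 by omega,
    show (4 * a + 6 - 2) / 2 - (a + 1) - 1 = a by omega]
  push_cast
  ring

end InnerArray

section OuterRows

variable {n j t v : ℕ}

theorem R1_mem_Icc (hn : n % 4 = 2) (h10 : 10 ≤ n) (hj1 : 1 ≤ j) (hj : j ≤ n) :
    R1 n j ∈ Icc (n ^ 2 / 2 - n + 1) (n ^ 2 / 2 + n) := by
  have := two_mul_le_sq_div_two (n := n) (by omega)
  rw [mem_Icc]; unfold R1; simp only [Nat.even_iff, Nat.odd_iff]; split_ifs <;> omega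

theorem R1_add_Rn (hn : n % 4 = 2) (h10 : 10 ≤ n) (hj1 : 1 ≤ j) (hj : j ≤ n) :
    R1 n j + Rn n j = n ^ 2 + 1 := by
  have := mem_Icc.1 (R1_mem_Icc hn h10 hj1 hj)
  have : n ^ 2 / 2 + n ≤ n ^ 2 := by have := two_mul_le_sq_div_two (n := n) (by omega); omega
  unfold Rn; omega

theorem exists_R1_eq_or (hn : n % 4 = 2) (h10 : 10 ≤ n) (ht1 : 1 ≤ t) (ht : t ≤ n) :
    ∃ j ∈ Icc 1 n, R1 n j + n = n ^ 2 / 2 + t ∨ R1 n j + t = n ^ 2 / 2 + n + 1 := by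
  have := two_mul_le_sq_div_two (n := n) (by omega)
  refine ⟨if t = n then 1 else t + 1, by rw [mem_Icc]; split_ifs <;> omega, ?_⟩
  unfold R1; simp only [Nat.even_iff, Nat.odd_iff]; split_ifs <;> omega

theorem exists_R1_or_Rn_eq (hn : n % 4 = 2) (h10 : 10 ≤ n) (hv1 : n ^ 2 / 2 - n < v)
    (hv : v ≤ n ^ 2 / 2 + n) : ∃ j ∈ Icc 1 n, R1 n j = v ∨ Rn n j = v := by
  have hsq := two_mul_sq_div_two (n := n) (Nat.even_iff.2 (by omega))
  have := two_mul_le_sq_div_two (n := n) (by omega)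
  obtain ⟨j, hj, h⟩ := exists_R1_eq_or hn h10 (t := if v ≤ n ^ 2 / 2 then v + n - n ^ 2 / 2
    else n ^ 2 / 2 + n + 1 - v) (by split_ifs <;> omega) (by split_ifs <;> omega)
  refine ⟨j, hj, ?_⟩
  unfold Rn
  split_ifs at h <;> omega

theorem R1_one_add_R1_two (hn : n % 4 = 2) (h10 : 10 ≤ n) :
    (R1 n 1 + R1 n 2 : ℤ) = n ^ 2 - n + 2 := by
  have hsq := two_mul_sq_div_two (n := n) (Nat.even_iff.2 (by omega))
  have := two_mul_le_sq_div_two (n := n) (by omega)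
  have h : R1 n 1 + R1 n 2 + n = n ^ 2 + 2 := by
    unfold R1; simp only [Nat.even_iff, Nat.odd_iff]; split_ifs <;> omega
  have hZ : (R1 n 1 + R1 n 2 + n : ℤ) = n ^ 2 + 2 := by exact_mod_cast h
  linarith

theorem R1_add_R1_pair (hn : n % 4 = 2) (h10 : 10 ≤ n) {i : ℕ} (hi : i < (n - 2) / 2) :
    (R1 n (2 * i + 3) + R1 n (2 * i + 4) : ℤ) =
      if i < (n - 2) / 4 then (n : ℤ) ^ 2 + 2
      else if i = (n - 2) / 4 then (n : ℤ) ^ 2 + n - 1 else (n : ℤ) ^ 2 := by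
  have hsq := two_mul_sq_div_two (n := n) (Nat.even_iff.2 (by omega))
  have := two_mul_le_sq_div_two (n := n) (by omega)
  have e1 : R1 n (2 * i + 3) = if i < (n - 2) / 4 then n ^ 2 / 2 + n - 1 - 2 * i
      else if i = (n - 2) / 4 then n ^ 2 / 2 + n - n / 2 else n ^ 2 / 2 - n + 2 * i + 2 := by
    unfold R1; simp only [Nat.even_iff, Nat.odd_iff]; split_ifs <;> omega
  have e2 : R1 n (2 * i + 4) = if i < (n - 2) / 4 then n ^ 2 / 2 - n + 2 * i + 3
      else if i = (n - 2) / 4 then n ^ 2 / 2 + n - n / 2 - 1 else n ^ 2 / 2 + n - 2 - 2 * i := by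
    unfold R1; simp only [Nat.even_iff, Nat.odd_iff]; split_ifs <;> omega
  have hsq' : ((n ^ 2 : ℕ) : ℤ) = (n : ℤ) ^ 2 := by push_cast; ring
  rw [e1, e2]
  split_ifs <;> omega

theorem two_mul_sum_R1 (hn : n % 4 = 2) (h10 : 10 ≤ n) :
    2 * ∑ j ∈ Icc 1 n, (R1 n j : ℤ) = n * (n ^ 2 + 1) := by
  have hpairs := sum_Icc_two_mul_eq_sum_pairs (fun j => (R1 n j : ℤ)) (n / 2)
  rw [show 2 * (n / 2) = n by omega, show n / 2 = (n - 2) / 2 + 1 by omega,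
    sum_range_succ'] at hpairs
  rw [hpairs, sum_congr rfl fun i hi =>
      show (R1 n (2 * (i + 1) + 1) + R1 n (2 * (i + 1) + 2) : ℤ) = _
      from R1_add_R1_pair hn h10 (mem_range.1 hi),
    sum_range_ite_lt_ite_eq _ _ _ (by omega), R1_one_add_R1_two hn h10]
  obtain ⟨a, rfl⟩ : ∃ a, n = 4 * a + 6 := ⟨(n - 6) / 4, by omega⟩
  rw [show (4 * a + 6 - 2) / 4 = a + 1 by omega,
    show (4 * a + 6 - 2) / 2 - (a + 1) - 1 = a by omega]
  push_cast
  ring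

end OuterRows

section MagicSquare

variable {n r c v : ℕ}

theorem G_mem_Icc (hn : n % 4 = 2) (hr1 : 1 ≤ r) (hr : r ≤ n - 2) (hc1 : 1 ≤ c)
    (hc : c ≤ n) : G n r c ∈ Icc 1 (n ^ 2) := by
  unfold G; split_ifs
  · exact B'_mem_Icc hn hr1 hr (by omega) (by omega)
  · exact B'_mem_Icc hn hr1 hr hc1 hc

theorem F'_one : F' n 1 c = R1 n c := if_pos rfl

theorem F'_self (h : n ≠ 1) : F' n n c = Rn n c := by rw [F', if_neg h, if_pos rfl]

theorem F'_succ (hr1 : 1 ≤ r) (hr : r ≤ n - 2) : F' n (r + 1) c = G n r c := by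
  rw [F', if_neg (by omega), if_neg (by omega), Nat.add_sub_cancel]

theorem F'_mem_Icc (hn : n % 4 = 2) (h10 : 10 ≤ n) (hr1 : 1 ≤ r) (hr : r ≤ n) (hc1 : 1 ≤ c)
    (hc : c ≤ n) : F' n r c ∈ Icc 1 (n ^ 2) := by
  have hR1 := mem_Icc.1 (R1_mem_Icc hn h10 hc1 hc)
  have hR1Rn := R1_add_Rn hn h10 hc1 hc
  have := two_mul_le_sq_div_two (n := n) (by omega)
  rw [mem_Icc]
  rcases (show r = 1 ∨ r = n ∨ (1 ≤ r - 1 ∧ r - 1 ≤ n - 2) by omega) with rfl | rfl | hr'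
  · rw [F'_one]; omega
  · rw [F'_self (by omega)]; omega
  · obtain ⟨r, rfl⟩ : ∃ r', r = r' + 1 := ⟨r - 1, by omega⟩
    rw [F'_succ (by omega) (by omega)]
    exact mem_Icc.1 (G_mem_Icc hn (by omega) (by omega) hc1 hc)

theorem exists_F'_eq (hn : n % 4 = 2) (h10 : 10 ≤ n) (hv1 : 1 ≤ v) (hv : v ≤ n ^ 2) :
    ∃ r ∈ Icc 1 n, ∃ c ∈ Icc 1 n, F' n r c = v := by
  have hband : n / 2 * (n - 2) + n = n ^ 2 / 2 := by
    obtain ⟨m, rfl⟩ : ∃ m, n = 2 * m + 2 := ⟨n / 2 - 1, by omega⟩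
    rw [show (2 * m + 2) / 2 = m + 1 by omega, show (2 * m + 2) ^ 2 / 2 = 2 * (m + 1) * (m + 1) by
      rw [show (2 * m + 2) ^ 2 = 2 * (2 * (m + 1) * (m + 1)) by ring]; omega]
    rw [show 2 * m + 2 - 2 = 2 * m by omega]; ring
  have hsq := two_mul_sq_div_two (n := n) (Nat.even_iff.2 (by omega))
  by_cases hmid : n ^ 2 / 2 - n < v ∧ v ≤ n ^ 2 / 2 + n
  · obtain ⟨j, hj, h | h⟩ := exists_R1_or_Rn_eq hn h10 hmid.1 hmid.2
    · exact ⟨1, mem_Icc.2 ⟨le_rfl, by omega⟩, j, hj, by rw [F'_one, h]⟩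
    · exact ⟨n, mem_Icc.2 ⟨by omega, le_rfl⟩, j, hj, by rw [F'_self (by omega), h]⟩
  obtain ⟨r, hr, c, hc, h⟩ := exists_B'_eq hn hv1 hv (by omega)
  rw [mem_Icc] at hr hc
  refine ⟨r + 1, mem_Icc.2 ⟨by omega, by omega⟩, if S' n r then n + 1 - c else c,
    by rw [mem_Icc]; split_ifs <;> omega, ?_⟩
  rw [F'_succ hr.1 hr.2, G]
  split_ifs
  · rw [show n + 1 - (n + 1 - c) = c by omega, h]
  · exact h

theorem F'_bijOn (hn : n % 4 = 2) (h10 : 10 ≤ n) :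
    Set.BijOn (fun rc : ℕ × ℕ => F' n rc.1 rc.2) (Set.Icc 1 n ×ˢ Set.Icc 1 n)
      (Set.Icc 1 (n ^ 2)) := by
  rw [← coe_Icc, ← coe_Icc, ← coe_product]
  have hmaps : Set.MapsTo (fun rc : ℕ × ℕ => F' n rc.1 rc.2) ↑(Icc 1 n ×ˢ Icc 1 n)
      ↑(Icc 1 (n ^ 2)) := fun rc hrc => by
    simp only [coe_product, coe_Icc, Set.mem_prod, Set.mem_Icc] at hrc
    exact F'_mem_Icc hn h10 hrc.1.1 hrc.1.2 hrc.2.1 hrc.2.2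
  have hsurj : Set.SurjOn (fun rc : ℕ × ℕ => F' n rc.1 rc.2) ↑(Icc 1 n ×ˢ Icc 1 n)
      ↑(Icc 1 (n ^ 2)) := fun v hv => by
    obtain ⟨r, hr, c, hc, h⟩ := exists_F'_eq hn h10 (mem_Icc.1 hv).1 (mem_Icc.1 hv).2
    exact ⟨(r, c), mem_product.2 ⟨hr, hc⟩, h⟩
  exact ⟨hmaps, injOn_of_surjOn_of_card_le _ hmaps hsurj (by simp [card_product, sq]), hsurj⟩

theorem R1_one : R1 n 1 = n ^ 2 / 2 + 1 := if_pos rfl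

theorem R1_self (h : n ≠ 1) : R1 n n = n ^ 2 / 2 + 2 := by rw [R1, if_neg h, if_pos rfl]

theorem Rn_eq (hn : n % 4 = 2) (h10 : 10 ≤ n) (hc1 : 1 ≤ c) (hc : c ≤ n) :
    (Rn n c : ℤ) = n ^ 2 + 1 - R1 n c := by
  rw [eq_sub_iff_add_eq, add_comm]; exact_mod_cast R1_add_Rn hn h10 hc1 hc

theorem two_mul_sum_F'_row (hn : n % 4 = 2) (h10 : 10 ≤ n) (hr1 : 1 ≤ r) (hr : r ≤ n) :
    2 * ∑ c ∈ Icc 1 n, (F' n r c : ℤ) = n * (n ^ 2 + 1) := by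
  rcases (show r = 1 ∨ r = n ∨ (1 ≤ r - 1 ∧ r - 1 ≤ n - 2) by omega) with rfl | rfl | hr'
  · simp only [F'_one]; exact two_mul_sum_R1 hn h10
  · rw [sum_congr rfl fun c hc => by
      rw [F'_self (by omega), Rn_eq hn h10 (mem_Icc.1 hc).1 (mem_Icc.1 hc).2],
      sum_sub_distrib, mul_sub, two_mul_sum_R1 hn h10, sum_const, Nat.card_Icc, nsmul_eq_mul]
    push_cast; ring
  · obtain ⟨r, rfl⟩ : ∃ r', r = r' + 1 := ⟨r - 1, by omega⟩
    simp only [F'_succ (by omega : 1 ≤ r) (by omega : r ≤ n - 2)]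
    exact two_mul_sum_G_row hn (by omega)

theorem two_mul_sum_F'_col (hn : n % 4 = 2) (h10 : 10 ≤ n) (hc1 : 1 ≤ c) (hc : c ≤ n) :
    2 * ∑ r ∈ Icc 1 n, (F' n r c : ℤ) = n * (n ^ 2 + 1) := by
  rw [sum_Icc_one_eq_first_add_sum_add_last _ (by omega), F'_one, F'_self (by omega),
    Rn_eq hn h10 hc1 hc,
    sum_congr rfl fun r hr => by rw [F'_succ (mem_Icc.1 hr).1 (mem_Icc.1 hr).2]]
  linear_combination two_mul_sum_G_col hn hc1 hc

theorem two_mul_sum_F'_diag (hn : n % 4 = 2) (h10 : 10 ≤ n) :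
    2 * ∑ r ∈ Icc 1 n, (F' n r r : ℤ) = n * (n ^ 2 + 1) := by
  rw [sum_Icc_one_eq_first_add_sum_add_last _ (by omega), F'_one, F'_self (by omega),
    Rn_eq hn h10 (by omega) le_rfl,
    sum_congr rfl fun r hr => by rw [F'_succ (mem_Icc.1 hr).1 (mem_Icc.1 hr).2], R1_one,
    R1_self (by omega)]
  push_cast
  linear_combination two_mul_sum_G_diag hn (by omega)

theorem two_mul_sum_F'_antidiag (hn : n % 4 = 2) (h10 : 10 ≤ n) :
    2 * ∑ r ∈ Icc 1 n, (F' n r (n + 1 - r) : ℤ) = n * (n ^ 2 + 1) := by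
  rw [sum_Icc_one_eq_first_add_sum_add_last _ (by omega), F'_one, F'_self (by omega),
    show n + 1 - n = 1 by omega,
    Nat.add_sub_cancel, Rn_eq hn h10 le_rfl (by omega),
    sum_congr rfl fun r hr => by
      rw [F'_succ (mem_Icc.1 hr).1 (mem_Icc.1 hr).2, show n + 1 - (r + 1) = n - r by omega],
    R1_one, R1_self (by omega)]
  push_cast
  linear_combination two_mul_sum_G_antidiag hn (by omega)

end MagicSquare

/-- `F'` is a magic square of order `n`: its values on `{1,…,n}²` are exactly the numbers
`1,…,n²` each once, and every row, column and both main diagonals sum to `n(n²+1)/2`. -/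
theorem singly_even_is_magic_square (n : ℕ) (h2 : n % 4 = 2) (hn : 10 ≤ n) :
    Set.BijOn (fun rc : ℕ × ℕ => F' n rc.1 rc.2)
      (Set.Icc 1 n ×ˢ Set.Icc 1 n) (Set.Icc 1 (n ^ 2)) ∧
    (∀ r ∈ Finset.Icc 1 n, ∑ c ∈ Finset.Icc 1 n, F' n r c = n * (n ^ 2 + 1) / 2) ∧
    (∀ c ∈ Finset.Icc 1 n, ∑ r ∈ Finset.Icc 1 n, F' n r c = n * (n ^ 2 + 1) / 2) ∧
    (∑ r ∈ Finset.Icc 1 n, F' n r r = n * (n ^ 2 + 1) / 2) ∧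
    (∑ r ∈ Finset.Icc 1 n, F' n r (n + 1 - r) = n * (n ^ 2 + 1) / 2) := by
  have half {S : ℕ} (h : 2 * (S : ℤ) = n * (n ^ 2 + 1)) : S = n * (n ^ 2 + 1) / 2 := by
    have : 2 * S = n * (n ^ 2 + 1) := by exact_mod_cast h
    omega
  refine ⟨F'_bijOn h2 hn, fun r hr => half ?_, fun c hc => half ?_, half ?_, half ?_⟩ <;>
    push_cast
  · exact two_mul_sum_F'_row h2 hn (mem_Icc.1 hr).1 (mem_Icc.1 hr).2
  · exact two_mul_sum_F'_col h2 hn (mem_Icc.1 hc).1 (mem_Icc.1 hc).2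
  · exact two_mul_sum_F'_diag h2 hn
  · exact two_mul_sum_F'_antidiag h2 hn
end
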